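/- arXiv:2307.12677 — 2 statements merged into one kernel-verified Lean document; each statement's English description precedes it below -/
import Mathlib

section
/- Consider the scalar linear test problem u'(t) = λu(t) with λ ∈ ℂ. Given u^n ∈ ℂ, Δt > 0, set z = λΔt and u^{n+1} = (1 + z + z²/2 + z³/6)u^n, and let û be the left-biased cubic Hermite reconstruction û(t) = (1 − t³/Δt³)u^n + (t − t³/Δt²)·λu^n + (t²/2 − t³/(2Δt))·λ²u^n + (t³/Δt³)·u^{n+1} for t ∈ [0, Δt], with residual R(t) = û'(t) − λû(t). Then √Δt · (∫₀^{Δt} |R(t)|² dt)^{1/2} = (1/(6√7))·Δt⁴·|λ|⁴·|u^n|. -/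
/-!
On `[0, Δt]` the left-biased cubic Hermite reconstruction reproduces cubics, and the data it
interpolates are exactly those of the cubic Taylor polynomial `T₃(t) = uⁿ ∑_{k ≤ 3} (λt)ᵏ / k!`
of the exact solution: `u^{n+1} = T₃(Δt)` is the stability function applied to `uⁿ`. Hence
`û = T₃`, and since `T₃' = λ T₂` the residual is `λ (T₂ - T₃)(t) = -λ⁴ t³ uⁿ / 6`, whose squared
norm integrates to `|λ|⁸ |uⁿ|² Δt⁷ / 252`.
-/

open Finset Nat

noncomputable section

/-- The degree-`p` Taylor polynomial at `0` of `t ↦ exp (λ t) u`. -/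
def expTaylor (p : ℕ) (lam u t : ℂ) : ℂ :=
  u * ∑ k ∈ range (p + 1), (lam * t) ^ k / k !

theorem expTaylor_succ (p : ℕ) (lam u t : ℂ) :
    expTaylor (p + 1) lam u t = expTaylor p lam u t + u * (lam * t) ^ (p + 1) / (p + 1)! := by
  rw [expTaylor, sum_range_succ, mul_add, ← expTaylor, mul_div_assoc]

theorem hasDerivAt_expTaylor_succ (p : ℕ) (lam u t : ℂ) :
    HasDerivAt (expTaylor (p + 1) lam u) (lam * expTaylor p lam u t) t := by
  induction p generalizing t with
  | zero =>
    have h : expTaylor 1 lam u = fun s => u * (1 + lam * s) :=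
      funext fun s => by simp [expTaylor, sum_range_succ]
    rw [h]
    exact (((hasDerivAt_id' t).const_mul lam).const_add 1 |>.const_mul u).congr_deriv
      (by simp [expTaylor, mul_comm])
  | succ p ih =>
    have hmono : HasDerivAt (fun s => u * (lam * s) ^ (p + 2) / (p + 2)!)
        (u * ((p + 2) * (lam * t) ^ (p + 1) * lam) / (p + 2)!) t :=
      (((hasDerivAt_id t).const_mul lam).pow (p + 2)).const_mul u |>.div_const _ |>.congr_deriv
        (by simp)
    have hfun : expTaylor (p + 2) lam u = fun s =>
        expTaylor (p + 1) lam u s + u * (lam * s) ^ (p + 2) / (p + 2)! :=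
      funext (expTaylor_succ (p + 1) lam u)
    rw [hfun, expTaylor_succ p]
    refine ((ih t).add hmono).congr_deriv ?_
    have hfac : ((p + 2)! : ℂ) = (p + 2) * (p + 1)! := by
      rw [factorial_succ (p + 1)]
      push_cast
      ring
    have hfac_ne : ((p + 1)! : ℂ) ≠ 0 := by exact_mod_cast factorial_ne_zero (p + 1)
    have hp_ne : (p + 2 : ℂ) ≠ 0 := by exact_mod_cast succ_ne_zero (p + 1)
    rw [hfac]
    field_simp

theorem deriv_expTaylor_sub_mul (p : ℕ) (lam u t : ℂ) :
    deriv (expTaylor (p + 1) lam u) t - lam * expTaylor (p + 1) lam u t =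
      -(lam * u * (lam * t) ^ (p + 1) / (p + 1)!) := by
  rw [(hasDerivAt_expTaylor_succ p lam u t).deriv, expTaylor_succ]
  ring

/-- The cubic interpolating `u₀, u₀', u₀''` at `t = 0` and `u₁` at `t = Δt`. -/
def leftCubicHermite (Δt : ℝ) (u₀ du₀ d2u₀ u₁ : ℂ) (t : ℝ) : ℂ :=
  ((1 - t ^ 3 / Δt ^ 3 : ℝ) : ℂ) * u₀ + ((t - t ^ 3 / Δt ^ 2 : ℝ) : ℂ) * du₀ +
    ((t ^ 2 / 2 - t ^ 3 / (2 * Δt) : ℝ) : ℂ) * d2u₀ + ((t ^ 3 / Δt ^ 3 : ℝ) : ℂ) * u₁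

theorem leftCubicHermite_cubic {Δt : ℝ} (hΔt : Δt ≠ 0) (a b c d : ℂ) (t : ℝ) :
    leftCubicHermite Δt a b c (a + b * Δt + c / 2 * Δt ^ 2 + d * Δt ^ 3) t =
      a + b * t + c / 2 * t ^ 2 + d * t ^ 3 := by
  have : (Δt : ℂ) ≠ 0 := Complex.ofReal_ne_zero.mpr hΔt
  simp only [leftCubicHermite]
  push_cast
  field_simp
  ring

theorem expTaylor_three (lam u s : ℂ) :
    expTaylor 3 lam u s = u + lam * u * s + lam ^ 2 * u / 2 * s ^ 2 + lam ^ 3 * u / 6 * s ^ 3 := by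
  simp only [expTaylor, sum_range_succ, sum_range_zero, factorial]
  push_cast
  ring

theorem leftCubicHermite_expTaylor {Δt : ℝ} (hΔt : Δt ≠ 0) (lam u : ℂ) (t : ℝ) :
    leftCubicHermite Δt u (lam * u) (lam ^ 2 * u) (expTaylor 3 lam u Δt) t =
      expTaylor 3 lam u t := by
  rw [expTaylor_three, expTaylor_three, leftCubicHermite_cubic hΔt]

theorem sqrt_mul_sqrt_integral_norm_sq_of_norm_eq_mul_pow {E : Type*} [NormedAddCommGroup E]
    {R : ℝ → E} {C Δt : ℝ} {n : ℕ} (hC : 0 ≤ C) (hΔt : 0 ≤ Δt)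
    (hR : ∀ t, ‖R t‖ = C * |t| ^ n) :
    √Δt * √(∫ t in (0 : ℝ)..Δt, ‖R t‖ ^ 2) = C * Δt ^ (n + 1) / √(2 * n + 1) := by
  have hint : ∫ t in (0 : ℝ)..Δt, ‖R t‖ ^ 2 = C ^ 2 * (Δt ^ (2 * n + 1) / (2 * n + 1)) := by
    have (t : ℝ) : ‖R t‖ ^ 2 = C ^ 2 * t ^ (2 * n) := by
      rw [hR, mul_pow, ← pow_mul, mul_comm n 2, pow_mul, sq_abs, ← pow_mul]
    simp_rw [this]
    rw [intervalIntegral.integral_const_mul, integral_pow]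
    norm_num
  rw [hint, ← Real.sqrt_mul hΔt, eq_div_iff (by positivity),
    ← Real.sqrt_sq (by positivity : 0 ≤ C * Δt ^ (n + 1)), ← Real.sqrt_mul (by positivity)]
  congr 1
  field_simp
  ring

end

/-- Scaled `L²` norm of the residual of the left-biased cubic Hermite
reconstruction of one step of any explicit third-order, three-stage Runge-Kutta
method applied to the linear test problem `u' = λu`. -/
theorem rk33_left_cubic_hermite_residual_L2
    (lam : ℂ) (uN : ℂ) (Δt : ℝ) (hΔt : 0 < Δt)
    (z : ℂ) (hz : z = lam * Δt)
    (uN1 : ℂ) (huN1 : uN1 = (1 + z + z ^ 2 / 2 + z ^ 3 / 6) * uN)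
    (uhat : ℝ → ℂ)
    (huhat : ∀ t : ℝ, uhat t =
      ((1 - t ^ 3 / Δt ^ 3 : ℝ) : ℂ) * uN +
      ((t - t ^ 3 / Δt ^ 2 : ℝ) : ℂ) * (lam * uN) +
      ((t ^ 2 / 2 - t ^ 3 / (2 * Δt) : ℝ) : ℂ) * (lam ^ 2 * uN) +
      ((t ^ 3 / Δt ^ 3 : ℝ) : ℂ) * uN1)
    (R : ℝ → ℂ)
    (hR : ∀ t : ℝ, R t = deriv uhat t - lam * uhat t) :
    Real.sqrt Δt * Real.sqrt (∫ t in (0 : ℝ)..Δt, ‖R t‖ ^ 2) =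
      (1 / (6 * Real.sqrt 7)) * Δt ^ 4 * ‖lam‖ ^ 4 * ‖uN‖ := by
  have huN1_taylor : uN1 = expTaylor 3 lam uN Δt := by
    rw [huN1, hz, expTaylor_three]
    ring
  have huhat_taylor : uhat = fun t : ℝ => expTaylor 3 lam uN t := funext fun t => by
    rw [huhat, huN1_taylor]
    exact leftCubicHermite_expTaylor hΔt.ne' lam uN t
  have hR_taylor (t : ℝ) : R t = -(lam * uN * (lam * t) ^ 3 / 3!) := by
    rw [hR, huhat_taylor, ((hasDerivAt_expTaylor_succ 2 lam uN t).comp_ofReal).deriv,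
      ← (hasDerivAt_expTaylor_succ 2 lam uN t).deriv, deriv_expTaylor_sub_mul]
  have hR_norm (t : ℝ) : ‖R t‖ = ‖lam‖ ^ 4 * ‖uN‖ / 6 * |t| ^ 3 := by
    rw [hR_taylor]
    simp only [norm_neg, norm_div, norm_mul, norm_pow, Complex.norm_real, Real.norm_eq_abs]
    norm_num [factorial]
    ring
  rw [sqrt_mul_sqrt_integral_norm_sq_of_norm_eq_mul_pow (by positivity) hΔt.le hR_norm]
  norm_num
  ring
end

section
/- Consider the scalar linear test problem u'(t) = λu(t) with λ ∈ ℂ. Given u^n ∈ ℂ, Δt > 0, set z = λΔt and u^{n+1} = (1 + z + z²/2 + z³/6)u^n, and let û be the central cubic Hermite reconstruction û(t) = (1 − 3t²/Δt² + 2t³/Δt³)u^n + (t − 2t²/Δt + t³/Δt²)·λu^n + (3t²/Δt² − 2t³/Δt³)·u^{n+1} + (−t²/Δt + t³/Δt²)·λu^{n+1} for t ∈ [0, Δt], with residual R(t) = û'(t) − λû(t). Then √Δt · (∫₀^{Δt} |R(t)|² dt)^{1/2} = (1/(6√105))·Δt⁴·|λ|⁴·|u^n|·√(8 + Δt²|λ|²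 − 5·Δt·Re(λ)). -/
/-!
For `u' = λu` the cubic Hermite reconstruction of a step `uⁿ⁺¹ = R(z) uⁿ` with
`R(z) = 1 + z + z²/2 + z³/6` has the residual
`R(t) = (λ⁴ uⁿ / 6) · t (Δt - t) ((1 + λΔt) t - 2Δt)`:
it vanishes at both nodes because the reconstruction matches the slopes `λuⁿ`, `λuⁿ⁺¹` there.
Then `|R(t)|²` is `t²(Δt - t)²` times a real quadratic in `t`, whose integral over `[0, Δt]`
is elementary.
-/

open intervalIntegral

theorem hasDerivAt_cubic (a b c d w : ℂ) :
    HasDerivAt (fun w ↦ a + b * w + c * w ^ 2 + d * w ^ 3) (b + 2 * c * w + 3 * d * w ^ 2) w :=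
  (((((hasDerivAt_id' w).const_mul b).const_add a).fun_add
    ((hasDerivAt_pow 2 w).const_mul c)).fun_add
      ((hasDerivAt_pow 3 w).const_mul d)).congr_deriv (by push_cast; ring)

noncomputable def cubicHermite (Δt : ℝ) (u₀ f₀ u₁ f₁ : ℂ) (t : ℝ) : ℂ :=
  ((1 - 3 * t ^ 2 / Δt ^ 2 + 2 * t ^ 3 / Δt ^ 3 : ℝ) : ℂ) * u₀ +
    ((t - 2 * t ^ 2 / Δt + t ^ 3 / Δt ^ 2 : ℝ) : ℂ) * f₀ +
    ((3 * t ^ 2 / Δt ^ 2 - 2 * t ^ 3 / Δt ^ 3 : ℝ) : ℂ) * u₁ +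
    ((-(t ^ 2) / Δt + t ^ 3 / Δt ^ 2 : ℝ) : ℂ) * f₁

theorem cubicHermite_eq (Δt : ℝ) (u₀ f₀ u₁ f₁ : ℂ) :
    cubicHermite Δt u₀ f₀ u₁ f₁ = fun t : ℝ ↦
      u₀ + f₀ * t + ((3 * (u₁ - u₀) / Δt - 2 * f₀ - f₁) / Δt) * (t : ℂ) ^ 2 +
        ((2 * (u₀ - u₁) / Δt + f₀ + f₁) / Δt ^ 2) * (t : ℂ) ^ 3 := by
  funext t
  simp only [cubicHermite]
  push_cast
  ring

theorem hasDerivAt_cubicHermite (Δt : ℝ) (u₀ f₀ u₁ f₁ : ℂ) (t : ℝ) :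
    HasDerivAt (cubicHermite Δt u₀ f₀ u₁ f₁)
      (f₀ + 2 * ((3 * (u₁ - u₀) / Δt - 2 * f₀ - f₁) / Δt) * t +
        3 * ((2 * (u₀ - u₁) / Δt + f₀ + f₁) / Δt ^ 2) * (t : ℂ) ^ 2) t := by
  rw [cubicHermite_eq]
  exact (hasDerivAt_cubic _ _ _ _ _).comp_ofReal

noncomputable def rk3Stability (z : ℂ) : ℂ := 1 + z + z ^ 2 / 2 + z ^ 3 / 6

theorem cubicHermite_rk3_residual (lam u : ℂ) {Δt : ℝ} (hΔt : Δt ≠ 0) (t : ℝ) {u₁ : ℂ}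
    (hu₁ : u₁ = rk3Stability (lam * Δt) * u) :
    deriv (cubicHermite Δt u (lam * u) u₁ (lam * u₁)) t -
        lam * cubicHermite Δt u (lam * u) u₁ (lam * u₁) t =
      lam ^ 4 * u / 6 * ((t * (Δt - t) : ℝ) * ((1 + lam * Δt) * t - 2 * Δt)) := by
  rw [(hasDerivAt_cubicHermite ..).deriv, cubicHermite_eq, hu₁, rk3Stability]
  have : (Δt : ℂ) ≠ 0 := Complex.ofReal_ne_zero.mpr hΔt
  push_cast
  field_simp
  ring

theorem integral_sq_mul_sub_sq_mul_quadratic (a b c h : ℝ) :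
    ∫ t in (0 : ℝ)..h, (t * (h - t)) ^ 2 * (a * t ^ 2 + b * t + c) =
      h ^ 5 * (a * h ^ 2 / 105 + b * h / 60 + c / 30) := by
  have expand : ∀ t : ℝ, (t * (h - t)) ^ 2 * (a * t ^ 2 + b * t + c) =
      h ^ 2 * c * t ^ 2 + (h ^ 2 * b - 2 * h * c) * t ^ 3 + (h ^ 2 * a - 2 * h * b + c) * t ^ 4 +
        (b - 2 * h * a) * t ^ 5 + a * t ^ 6 := fun t ↦ by ring
  simp only [expand]
  simp (disch := exact Continuous.intervalIntegrable (by fun_prop) _ _) only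
    [integral_add, integral_const_mul, integral_pow]
  ring

theorem integral_norm_sq_rk3_residual (lam u : ℂ) (h : ℝ) :
    ∫ t in (0 : ℝ)..h, ‖lam ^ 4 * u / 6 * ((t * (h - t) : ℝ) * ((1 + lam * h) * t - 2 * h))‖ ^ 2 =
      (‖lam‖ ^ 4 * ‖u‖ / 6) ^ 2 * (h ^ 7 / 105 * (8 + h ^ 2 * ‖lam‖ ^ 2 - 5 * h * lam.re)) := by
  have integrand : ∀ t : ℝ,
      ‖lam ^ 4 * u / 6 * ((t * (h - t) : ℝ) * ((1 + lam * h) * t - 2 * h))‖ ^ 2 =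
        (‖lam‖ ^ 4 * ‖u‖ / 6) ^ 2 * ((t * (h - t)) ^ 2 *
          (((1 + h * lam.re) ^ 2 + (h * lam.im) ^ 2) * t ^ 2 + (-4 * h * (1 + h * lam.re)) * t +
            4 * h ^ 2)) := by
    intro t
    rw [norm_mul, norm_mul, mul_pow, mul_pow, Complex.norm_real, Real.norm_eq_abs, sq_abs,
      Complex.sq_norm ((1 + lam * h) * t - 2 * h), Complex.normSq_apply]
    simp only [norm_div, norm_mul, norm_pow, Complex.norm_ofNat, Complex.sub_re, Complex.sub_im,
      Complex.add_re, Complex.add_im, Complex.mul_re, Complex.mul_im, Complex.one_re,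
      Complex.one_im, Complex.ofReal_re, Complex.ofReal_im, Complex.re_ofNat, Complex.im_ofNat]
    ring
  simp only [integrand, integral_const_mul, integral_sq_mul_sub_sq_mul_quadratic]
  rw [Complex.sq_norm lam, Complex.normSq_apply]
  ring

/-- Scaled `L²` norm of the residual of the central cubic Hermite reconstruction
of one step of any explicit third-order, three-stage Runge-Kutta method applied
to the linear test problem `u' = λu`. -/
theorem rk33_central_cubic_hermite_residual_L2
    (lam : ℂ) (uN : ℂ) (Δt : ℝ) (hΔt : 0 < Δt)
    (z : ℂ) (hz : z = lam * Δt)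
    (uN1 : ℂ) (huN1 : uN1 = (1 + z + z ^ 2 / 2 + z ^ 3 / 6) * uN)
    (uhat : ℝ → ℂ)
    (huhat : ∀ t : ℝ, uhat t =
      ((1 - 3 * t ^ 2 / Δt ^ 2 + 2 * t ^ 3 / Δt ^ 3 : ℝ) : ℂ) * uN +
      ((t - 2 * t ^ 2 / Δt + t ^ 3 / Δt ^ 2 : ℝ) : ℂ) * (lam * uN) +
      ((3 * t ^ 2 / Δt ^ 2 - 2 * t ^ 3 / Δt ^ 3 : ℝ) : ℂ) * uN1 +
      ((-(t ^ 2) / Δt + t ^ 3 / Δt ^ 2 : ℝ) : ℂ) * (lam * uN1))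
    (R : ℝ → ℂ)
    (hR : ∀ t : ℝ, R t = deriv uhat t - lam * uhat t) :
    Real.sqrt Δt * Real.sqrt (∫ t in (0 : ℝ)..Δt, ‖R t‖ ^ 2) =
      (1 / (6 * Real.sqrt 105)) * Δt ^ 4 * ‖lam‖ ^ 4 * ‖uN‖ *
        Real.sqrt (8 + Δt ^ 2 * ‖lam‖ ^ 2 - 5 * Δt * lam.re) := by
  have huhat_eq : uhat = cubicHermite Δt uN (lam * uN) uN1 (lam * uN1) := funext huhat
  have hR_eq : ∀ t, R t = lam ^ 4 * uN / 6 * ((t * (Δt - t) : ℝ) * ((1 + lam * Δt) * t - 2 * Δt)) :=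
    fun t ↦ by rw [hR, huhat_eq, cubicHermite_rk3_residual lam uN hΔt.ne' t (by rw [huN1, hz]; rfl)]
  have hcoef : (1 / (6 * Real.sqrt 105)) ^ 2 = 1 / 3780 := by
    rw [div_pow, mul_pow, Real.sq_sqrt (by norm_num)]
    norm_num
  have hscaled : Δt * ((‖lam‖ ^ 4 * ‖uN‖ / 6) ^ 2 *
      (Δt ^ 7 / 105 * (8 + Δt ^ 2 * ‖lam‖ ^ 2 - 5 * Δt * lam.re))) =
      ((1 / (6 * Real.sqrt 105)) * Δt ^ 4 * ‖lam‖ ^ 4 * ‖uN‖) ^ 2 *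
        (8 + Δt ^ 2 * ‖lam‖ ^ 2 - 5 * Δt * lam.re) := by
    rw [mul_pow, mul_pow, mul_pow, hcoef]
    ring
  simp only [hR_eq, integral_norm_sq_rk3_residual]
  rw [← Real.sqrt_mul hΔt.le, hscaled, Real.sqrt_mul (sq_nonneg _), Real.sqrt_sq (by positivity)]
end
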